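/- Let Ψ, Φ, Γ, Λ, Ξ, Π : ℝ³ → ℝ³ and Υ, Σ, Ω : ℝ³ → M₃(ℝ) be continuous functions satisfying, for all a, a' ∈ ℝ³: Ψ_i(a+a') = Ψ_i(a) + Ψ_i(a'); Φ_i(a+a') = Φ_i(a) + Φ_i(a') − ε_{ink} a_n Ψ_k(a'); Γ_i(a+a') = Γ_i(a) + Γ_i(a'); Λ_i(a+a') = Λ_i(a) + Λ_i(a') + Π_m(a') a_m a_i − (1/2)(a_i δ_{lm} − a_l δ_{im}) Σ_{lm}(a'); Υ_{ij}(a+a') = Υ_{ij}(a) + Υ_{ij}(a') + ε_{ink} a_n Ω_{jk}(a'); Σ_{ij}(a+a') = Σ_{ij}(a) + Σ_{ij}(a') + 2(Π_i(a') a_j − Π_l(a') a_l δ_{ij}); Ξ_i(a+a') = Ξ_i(a) + Ξ_i(a'); Ω_{ij}(a+a') = Ω_{ij}(a) + Ω_{ij}(a'); Π_i(a+a') = Π_i(a) + Π_i(a'). Then Ψ ≡ 0, Ω ≡ 0, Π ≡ 0, and there exist constants f_{ij}, g_{ij}, h_{ij}, k_{ijk}, l_{ij}, h_i ∈ ℝ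 and h_{ijk} ∈ ℝ with h_{ijk} = h_{kji} and h_{iik} = 0, such that for all a ∈ ℝ³: Φ_i(a) = f_{ij} a_j, Γ_i(a) = g_{ij} a_j, Λ_i(a) = h_{ij} a_j + (1/4)(h_{jik} − (1/2)(h_j δ_{ik} + h_k δ_{ij})) a_j a_k, Υ_{ij}(a) = k_{ijk} a_k, Σ_{ij}(a) = (h_{ijk} + (1/2)(h_k δ_{ij} − h_i δ_{jk})) a_k, Ξ_i(a) = l_{ij} a_j. -/

import Mathlib

/-!
Each equation says that a function is additive up to a defect term, and such a defect is
symmetric in `a, a'` because `a + a' = a' + a`. Continuous additive maps on `ℝ³` are linear, so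
`Ψ`, `Ω` and `Π` are linear, and the symmetry of the defects `a × Ψ(a')`, `a × Ω_j(a')` and
`Π(a') aᵀ - (Π(a') · a) I` on basis vectors forces them to vanish. Then `Φ, Γ, Υ, Σ, Ξ` are
additive, hence linear. The defect `B(a, a')` of `Λ` is now bilinear and symmetric, so
`Λ(a) - B(a, a) / 2` is additive, hence linear; the symmetry of `B` on basis vectors is exactly
`h_{ijk} = h_{kji}` for the trace-free part of the coefficients of `Σ`.
-/

/-- The Levi-Civita symbol on `{1,2,3}` (indexed by `Fin 3`). -/
def eps (i j k : Fin 3) : ℝ :=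
  if (i, j, k) = (0, 1, 2) ∨ (i, j, k) = (1, 2, 0) ∨ (i, j, k) = (2, 0, 1) then 1
  else if (i, j, k) = (2, 1, 0) ∨ (i, j, k) = (1, 0, 2) ∨ (i, j, k) = (0, 2, 1) then -1
  else 0

/-- The Kronecker delta on `Fin 3`. -/
def kron (i j : Fin 3) : ℝ := if i = j then 1 else 0

open Matrix

theorem map_add_defect_comm {A M : Type*} [AddCommMagma A] [AddCancelCommMonoid M]
    (F : A → M) (c : A → A → M) (hF : ∀ a b, F (a + b) = F a + F b + c a b) (a b : A) :
    c a b = c b a := by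
  have h := hF b a
  rw [add_comm b a, hF a b, add_comm (F b)] at h
  exact add_left_cancel h

theorem eq_sum_mul_single_of_continuous_additive {ι : Type*} [Fintype ι] [DecidableEq ι]
    (F : (ι → ℝ) → ℝ) (hc : Continuous F) (hadd : ∀ a b, F (a + b) = F a + F b) (a : ι → ℝ) :
    F a = ∑ j, F (Pi.single j 1) * a j := by
  let L := (AddMonoidHom.mk' F hadd).toRealLinearMap hc
  have hL : ∀ x, L x = F x := fun _ => rfl
  calc F a = L (∑ j, a j • Pi.single j 1) := by rw [hL, ← pi_eq_sum_univ' a]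
    _ = ∑ j, F (Pi.single j 1) * a j := by simp_rw [map_sum, map_smul, hL, smul_eq_mul, mul_comm]

theorem apply_eq_sum_mul_single_of_continuous_additive {ι κ : Type*} [Fintype ι]
    [DecidableEq ι] (F : (ι → ℝ) → κ → ℝ) (hc : Continuous F)
    (hadd : ∀ a b i, F (a + b) i = F a i + F b i) (a : ι → ℝ) (i : κ) :
    F a i = ∑ j, F (Pi.single j 1) i * a j :=
  eq_sum_mul_single_of_continuous_additive (F · i) (by fun_prop) (fun a b => hadd a b i) a

theorem eq_zero_of_apply_single_eq_zero {ι κ : Type*} [Fintype ι] [DecidableEq ι]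
    (Ψ : (ι → ℝ) → κ → ℝ) (hc : Continuous Ψ) (hadd : ∀ a b i, Ψ (a + b) i = Ψ a i + Ψ b i)
    (h : ∀ q i, Ψ (Pi.single q 1) i = 0) : Ψ = 0 := by
  funext a i
  simp [apply_eq_sum_mul_single_of_continuous_additive Ψ hc hadd a i, h]

theorem sum_eps_mul_mul_eq_cross (a b : Fin 3 → ℝ) (i : Fin 3) :
    ∑ n, ∑ k, eps i n k * a n * b k = (a ⨯₃ b) i := by
  simp only [Fin.sum_univ_three, cross_apply]
  fin_cases i <;>
    simp only [eps, Fin.isValue, Fin.reduceFinMk, Fin.zero_eta, Fin.mk_one, cons_val,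
      Prod.mk.injEq, Fin.reduceEq, and_self, and_false, false_and, or_false, or_true,
      ↓reduceIte] <;>
    ring

theorem eq_zero_of_map_add_eq_add_add_cross (Φ Ψ : (Fin 3 → ℝ) → Fin 3 → ℝ) (hc : Continuous Ψ)
    (hadd : ∀ a b i, Ψ (a + b) i = Ψ a i + Ψ b i)
    (hΦ : ∀ a b, Φ (a + b) = Φ a + Φ b + a ⨯₃ Ψ b) : Ψ = 0 := by
  have hsymm := map_add_defect_comm Φ _ hΦ
  refine eq_zero_of_apply_single_eq_zero Ψ hc hadd fun q i => ?_
  have h01 := hsymm (Pi.single 0 1) (Pi.single 1 1)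
  have h02 := hsymm (Pi.single 0 1) (Pi.single 2 1)
  have h12 := hsymm (Pi.single 1 1) (Pi.single 2 1)
  simp only [cross_apply, Fin.isValue, ne_eq, one_ne_zero, zero_ne_one, Fin.reduceEq,
    not_false_eq_true, Pi.single_eq_of_ne, Pi.single_eq_same, zero_mul, one_mul, sub_self,
    zero_sub, sub_zero, vecCons_inj, neg_eq_zero, zero_eq_neg, and_true] at h01 h02 h12
  fin_cases q <;> fin_cases i <;> simp only [Fin.zero_eta, Fin.mk_one, Fin.reduceFinMk] <;>
    linarith

theorem eq_zero_of_map_add_eq_add_add_kron (S : (Fin 3 → ℝ) → Fin 3 → Fin 3 → ℝ)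
    (P : (Fin 3 → ℝ) → Fin 3 → ℝ) (hc : Continuous P)
    (hadd : ∀ a b i, P (a + b) i = P a i + P b i)
    (hS : ∀ a b i j, S (a + b) i j =
      S a i j + S b i j + 2 * (P b i * a j - (P b ⬝ᵥ a) * kron i j)) :
    P = 0 := by
  have hsymm : ∀ a b i j,
      P b i * a j - (P b ⬝ᵥ a) * kron i j = P a i * b j - (P a ⬝ᵥ b) * kron i j :=
    fun a b i j => by linarith [map_add_defect_comm (S · i j) _ (fun a b => hS a b i j) a b]
  refine eq_zero_of_apply_single_eq_zero P hc hadd fun q i => ?_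
  -- in dimension three some index `j` avoids both `i` and `q`
  obtain ⟨j, hji, hjq⟩ : ∃ j : Fin 3, j ≠ i ∧ j ≠ q := by
    fin_cases q <;> fin_cases i <;> decide
  simpa [kron, hji.symm, hjq] using hsymm (Pi.single j 1) (Pi.single q 1) i j

theorem map_add_sub_half_diag {A : Type*} [AddCommMagma A] (F : A → ℝ) (B : A → A → ℝ)
    (hBl : ∀ a b c, B (a + b) c = B a c + B b c) (hBr : ∀ a b c, B a (b + c) = B a b + B a c)
    (hF : ∀ a b, F (a + b) = F a + F b + B a b) (a b : A) :
    F (a + b) - B (a + b) (a + b) / 2 = (F a - B a a / 2) + (F b - B b b / 2) := by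
  rw [hF, hBl, hBr, hBr, map_add_defect_comm F B hF b a]
  ring

theorem sum_sum_kron_mul (x : ℝ) (a : Fin 3 → ℝ) (M : Fin 3 → Fin 3 → ℝ) (i : Fin 3) :
    ∑ l, ∑ m, (x * kron l m - a l * kron i m) * M l m = x * ∑ m, M m m - ∑ l, a l * M l i := by
  simp [kron, sub_mul, Finset.sum_sub_distrib, Finset.mul_sum]

theorem kron_comm (i j : Fin 3) : kron i j = kron j i := by
  simp [kron, eq_comm]

-- With `S i j k = Σ_{ij}(e_k)`, `tensorTrace S` and `tracelessPart S` are the paper's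
-- `h_k` and `h_{ijk}`.
noncomputable def tensorTrace (S : Fin 3 → Fin 3 → Fin 3 → ℝ) (k : Fin 3) : ℝ := ∑ m, S m m k

noncomputable def tracelessPart (S : Fin 3 → Fin 3 → Fin 3 → ℝ) (i j k : Fin 3) : ℝ :=
  S i j k - (1/2) * (tensorTrace S k * kron i j - tensorTrace S i * kron j k)

theorem sum_tracelessPart_self (S : Fin 3 → Fin 3 → Fin 3 → ℝ) (k : Fin 3) :
    ∑ i, tracelessPart S i i k = 0 := by
  simp only [tracelessPart, tensorTrace, Fin.sum_univ_three]
  fin_cases k <;>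
    simp only [kron, Fin.isValue, Fin.reduceFinMk, Fin.zero_eta, Fin.mk_one, Fin.reduceEq,
      ↓reduceIte] <;>
    ring

theorem tracelessPart_comm (S : Fin 3 → Fin 3 → Fin 3 → ℝ)
    (hS : ∀ i p q, S p i q - kron i p * tensorTrace S q = S q i p - kron i q * tensorTrace S p)
    (i j k : Fin 3) : tracelessPart S i j k = tracelessPart S k j i := by
  have := hS j i k
  simp only [tracelessPart, kron_comm j i, kron_comm k j] at this ⊢
  linarith

theorem quadratic_eq_sum_tracelessPart (S : Fin 3 → Fin 3 → Fin 3 → ℝ) (a : Fin 3 → ℝ)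
    (i : Fin 3) :
    (∑ l, a l * ∑ k, S l i k * a k - a i * ∑ m, ∑ k, S m m k * a k) / 4 =
      ∑ j, ∑ k, (1/4) * (tracelessPart S j i k
        - (1/2) * (tensorTrace S j * kron i k + tensorTrace S k * kron i j)) * a j * a k := by
  simp only [tracelessPart, tensorTrace, Fin.sum_univ_three]
  fin_cases i <;>
    simp only [kron, Fin.isValue, Fin.reduceFinMk, Fin.zero_eta, Fin.mk_one, Fin.reduceEq,
      ↓reduceIte] <;>
    ring

theorem exists_normal_form_of_lambda_cocycle (Lam : (Fin 3 → ℝ) → Fin 3 → ℝ)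
    (Sig : (Fin 3 → ℝ) → Fin 3 → Fin 3 → ℝ) (hLam : Continuous Lam) (hSig : Continuous Sig)
    (hSadd : ∀ a b i j, Sig (a + b) i j = Sig a i j + Sig b i j)
    (hL : ∀ a b i, Lam (a + b) i =
      Lam a i + Lam b i - (1/2) * ∑ l, ∑ m, (a i * kron l m - a l * kron i m) * Sig b l m) :
    ∃ (h : Fin 3 → Fin 3 → ℝ) (h3 : Fin 3 → Fin 3 → Fin 3 → ℝ) (hv : Fin 3 → ℝ),
      (∀ i j k, h3 i j k = h3 k j i) ∧ (∀ k, ∑ i, h3 i i k = 0) ∧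
      ∀ a : Fin 3 → ℝ,
        (∀ i, Lam a i = (∑ j, h i j * a j)
          + ∑ j, ∑ k, (1/4) * (h3 j i k - (1/2) * (hv j * kron i k + hv k * kron i j))
              * a j * a k) ∧
        (∀ i j, Sig a i j =
          ∑ k, (h3 i j k + (1/2) * (hv k * kron i j - hv i * kron j k)) * a k) := by
  set S : Fin 3 → Fin 3 → Fin 3 → ℝ := fun i j k => Sig (Pi.single k 1) i j
  have hSig_eq : ∀ a i j, Sig a i j = ∑ k, S i j k * a k := fun a i j =>
    eq_sum_mul_single_of_continuous_additive (Sig · i j) (by fun_prop)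
      (fun a b => hSadd a b i j) a
  set B : Fin 3 → (Fin 3 → ℝ) → (Fin 3 → ℝ) → ℝ :=
    fun i a b => (∑ l, a l * Sig b l i - a i * ∑ m, Sig b m m) / 2
  have hLB : ∀ i a b, Lam (a + b) i = Lam a i + Lam b i + B i a b := by
    intro i a b
    rw [hL, sum_sum_kron_mul]
    ring
  have hBl : ∀ i a b c, B i (a + b) c = B i a c + B i b c := by
    intro i a b c
    simp only [B, Pi.add_apply, add_mul, Finset.sum_add_distrib]
    ring
  have hBr : ∀ i a b c, B i a (b + c) = B i a b + B i a c := by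
    intro i a b c
    simp only [B, hSadd, mul_add, Finset.sum_add_distrib]
    ring
  have hG : ∀ i a, Lam a i - B i a a / 2
      = ∑ j, (Lam (Pi.single j 1) i - B i (Pi.single j 1) (Pi.single j 1) / 2) * a j :=
    fun i => eq_sum_mul_single_of_continuous_additive _ (by fun_prop)
      (map_add_sub_half_diag (Lam · i) (B i) (hBl i) (hBr i) (hLB i))
  refine ⟨fun i j => Lam (Pi.single j 1) i - B i (Pi.single j 1) (Pi.single j 1) / 2,
    tracelessPart S, tensorTrace S, tracelessPart_comm S fun i p q => ?_,
    sum_tracelessPart_self S, fun a => ⟨fun i => ?_, fun i j => ?_⟩⟩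
  · have := map_add_defect_comm (Lam · i) (B i) (hLB i) (Pi.single p 1) (Pi.single q 1)
    simp only [B, S, tensorTrace, kron, Pi.single_apply, ite_mul, one_mul, zero_mul,
      Finset.sum_ite_eq', Finset.mem_univ, ↓reduceIte] at this ⊢
    linarith
  · rw [← hG, ← quadratic_eq_sum_tracelessPart]
    simp only [B, hSig_eq]
    ring
  · rw [hSig_eq]
    exact Finset.sum_congr rfl fun k _ => by rw [tracelessPart]; ring

/-- The restriction of the Poisson–Lie cocycle condition on the Galilei group to the
subgroup of space translations: continuous solutions of the system have the stated
polynomial form, with `Ψ ≡ 0`, `Ω ≡ 0`, `Π ≡ 0`. -/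
theorem space_translation_cocycles
    (Psi Phi Gam Lam Xi Piv : (Fin 3 → ℝ) → Fin 3 → ℝ)
    (Ups Sig Om : (Fin 3 → ℝ) → Fin 3 → Fin 3 → ℝ)
    (hPsi : Continuous Psi) (hPhi : Continuous Phi) (hGam : Continuous Gam)
    (hLam : Continuous Lam) (hXi : Continuous Xi) (hPiv : Continuous Piv)
    (hUps : Continuous Ups) (hSig : Continuous Sig) (hOm : Continuous Om)
    (e1 : ∀ a a' : Fin 3 → ℝ, ∀ i, Psi (a + a') i = Psi a i + Psi a' i)
    (e2 : ∀ a a' : Fin 3 → ℝ, ∀ i, Phi (a + a') i =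
      Phi a i + Phi a' i - ∑ n, ∑ k, eps i n k * a n * Psi a' k)
    (e3 : ∀ a a' : Fin 3 → ℝ, ∀ i, Gam (a + a') i = Gam a i + Gam a' i)
    (e4 : ∀ a a' : Fin 3 → ℝ, ∀ i, Lam (a + a') i =
      Lam a i + Lam a' i + (∑ m, Piv a' m * a m * a i)
        - (1/2) * ∑ l, ∑ m, (a i * kron l m - a l * kron i m) * Sig a' l m)
    (e5 : ∀ a a' : Fin 3 → ℝ, ∀ i j, Ups (a + a') i j =
      Ups a i j + Ups a' i j + ∑ n, ∑ k, eps i n k * a n * Om a' j k)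
    (e6 : ∀ a a' : Fin 3 → ℝ, ∀ i j, Sig (a + a') i j =
      Sig a i j + Sig a' i j + 2 * (Piv a' i * a j - (∑ l, Piv a' l * a l) * kron i j))
    (e7 : ∀ a a' : Fin 3 → ℝ, ∀ i, Xi (a + a') i = Xi a i + Xi a' i)
    (e8 : ∀ a a' : Fin 3 → ℝ, ∀ i j, Om (a + a') i j = Om a i j + Om a' i j)
    (e9 : ∀ a a' : Fin 3 → ℝ, ∀ i, Piv (a + a') i = Piv a i + Piv a' i) :
    (∀ a : Fin 3 → ℝ, ∀ i, Psi a i = 0) ∧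
    (∀ a : Fin 3 → ℝ, ∀ i j, Om a i j = 0) ∧
    (∀ a : Fin 3 → ℝ, ∀ i, Piv a i = 0) ∧
    ∃ f g h l : Fin 3 → Fin 3 → ℝ, ∃ kc h3 : Fin 3 → Fin 3 → Fin 3 → ℝ,
      ∃ hv : Fin 3 → ℝ,
      (∀ i j k, h3 i j k = h3 k j i) ∧ (∀ k, ∑ i, h3 i i k = 0) ∧
      ∀ a : Fin 3 → ℝ,
        (∀ i, Phi a i = ∑ j, f i j * a j) ∧
        (∀ i, Gam a i = ∑ j, g i j * a j) ∧
        (∀ i, Lam a i = (∑ j, h i j * a j)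
          + ∑ j, ∑ k, (1/4) * (h3 j i k - (1/2) * (hv j * kron i k + hv k * kron i j))
              * a j * a k) ∧
        (∀ i j, Ups a i j = ∑ k, kc i j k * a k) ∧
        (∀ i j, Sig a i j =
          ∑ k, (h3 i j k + (1/2) * (hv k * kron i j - hv i * kron j k)) * a k) ∧
        (∀ i, Xi a i = ∑ j, l i j * a j) := by
  have hPsi0 : Psi = 0 := eq_zero_of_map_add_eq_add_add_cross (-Phi) Psi hPsi e1 fun a b => by
    ext i
    simp only [Pi.add_apply, Pi.neg_apply, e2, sum_eps_mul_mul_eq_cross]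
    ring
  have hOm0 : ∀ a j k, Om a j k = 0 := fun a j => congrFun <| congrFun
    (eq_zero_of_map_add_eq_add_add_cross (fun a i => Ups a i j) (fun a k => Om a j k)
      (by fun_prop) (fun a b k => e8 a b j k)
      fun a b => by ext i; simp only [Pi.add_apply, e5, sum_eps_mul_mul_eq_cross]) a
  have hPiv0 : Piv = 0 := eq_zero_of_map_add_eq_add_add_kron Sig Piv hPiv e9 e6
  obtain ⟨h, h3, hv, hsymm, htrace, hform⟩ :=
    exists_normal_form_of_lambda_cocycle Lam Sig hLam hSig
      (fun a b i j => by simpa [hPiv0] using e6 a b i j)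
      (fun a b i => by simpa [hPiv0] using e4 a b i)
  refine ⟨by simp [hPsi0], hOm0, by simp [hPiv0], fun i j => Phi (Pi.single j 1) i,
    fun i j => Gam (Pi.single j 1) i, h, fun i j => Xi (Pi.single j 1) i,
    fun i j k => Ups (Pi.single k 1) i j, h3, hv, hsymm, htrace,
    fun a => ⟨apply_eq_sum_mul_single_of_continuous_additive Phi hPhi
        (fun a b i => by simpa [hPsi0] using e2 a b i) a,
      apply_eq_sum_mul_single_of_continuous_additive Gam hGam e3 a, (hform a).1,
      fun i => apply_eq_sum_mul_single_of_continuous_additive (Ups · i) (by fun_prop)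
        (fun a b j => by simpa [hOm0] using e5 a b i j) a,
      (hform a).2, apply_eq_sum_mul_single_of_continuous_additive Xi hXi e7 a⟩⟩
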